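/- (Non-robustness of the feature-averaging network) Let d, k ≥ 1 with d ≥ 2 and 2k · ln d < √d, let μ : Fin k → ℝ^d be orthogonal equinorm cluster features with binary cluster labels s, and suppose for some real c ≥ 1 that |J₊| ≥ k/(1+c) and |J₋| ≥ k/(1+c). Set δ := 2(1+c) · √(d/k). Then the δ-robust accuracy of f_FA is nearly zero: the probability over (J, ξ) ~ (uniform on Fin k) ⊗ γ_d that sgn(f_FA(μ_J + ξ + ρ)) = s J holds for ALL perturbations ρ ∈ ℝ^d with ‖ρ‖ ≤ δ is at most 2k · d^{−(ln d)/2}. (The successful attack is ρ = ∓(2(1+c)/k)(Σ_{j∈J₊} μ_j − Σ_{j∈J₋} μ_j), whose norm is 2(1+c)√(d/k).) -/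

import Mathlib

/-
Attack a cluster with label `±1` by `ρ = a • (v∓ - v±)`, where `v₊`, `v₋` are the sums of the
features with label `1`, `-1` and `a = 2(1+c)/k`. Since `a‖v±‖² = a |J±| d ≥ 2d` while the
clean signal `⟪v±, μ_J⟫` is only `d`, the attack can fail only if `⟪v₊, ξ⟫ ≥ d`,
`⟪v₊, ξ⟫ ≤ -d` or `⟪v₋, ξ⟫ ≥ d`. Each `⟪v, ξ⟫` is a centred Gaussian of variance
`‖v‖² ≤ k d`, so each of these events has probability at most `exp (-d / 2k)`, and
`3 exp (-d / 2k) ≤ 2k d^(-ln d / 2)` because `k (ln d)² ≤ d`.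
-/

open MeasureTheory ProbabilityTheory Real Finset
open scoped RealInnerProductSpace

/-- The standard Gaussian measure on `ℝ^d`. -/
noncomputable def stdGaussian (d : ℕ) : Measure (EuclideanSpace ℝ (Fin d)) :=
  (Measure.pi fun _ : Fin d => gaussianReal 0 1).map (MeasurableEquiv.toLp 2 (Fin d → ℝ))

/-- The sign function: `1` on positive reals, `-1` otherwise. -/
noncomputable def sgn (z : ℝ) : ℝ := if 0 < z then 1 else -1

/-- The ReLU activation. -/
noncomputable def relu (z : ℝ) : ℝ := max z 0

/-- The feature-averaging network. -/
noncomputable def fFA {d k : ℕ} (μ : Fin k → EuclideanSpace ℝ (Fin d)) (s : Fin k → ℝ)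
    (x : EuclideanSpace ℝ (Fin d)) : ℝ :=
  relu ⟪∑ j ∈ univ.filter (fun j => s j = 1), μ j, x⟫ -
    relu ⟪∑ j ∈ univ.filter (fun j => s j = -1), μ j, x⟫

open scoped NNReal

section Gaussian

variable {E : Type*} [NormedAddCommGroup E] [InnerProductSpace ℝ E] [FiniteDimensional ℝ E]
  [MeasurableSpace E] [BorelSpace E]

lemma map_inner_stdGaussian (v : E) :
    (ProbabilityTheory.stdGaussian E).map (⟪v, ·⟫) = gaussianReal 0 (‖v‖₊ ^ 2) := by
  have h := IsGaussian.map_eq_gaussianReal (μ := ProbabilityTheory.stdGaussian E) (innerSL ℝ v)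
  rw [integral_strongDual_stdGaussian, variance_dual_stdGaussian, innerSL_apply_norm] at h
  convert h using 2
  · ext; simp
  · ext; simp

lemma hasSubgaussianMGF_id_gaussianReal (v : ℝ≥0) :
    HasSubgaussianMGF id v (gaussianReal 0 v) where
  integrable_exp_mul := integrable_exp_mul_gaussianReal
  mgf_le t := by simp [mgf_id_gaussianReal]

lemma stdGaussian_inner_ge_le (v : E) {t : ℝ} (ht : 0 ≤ t) :
    ProbabilityTheory.stdGaussian E {x | t ≤ ⟪v, x⟫} ≤
      ENNReal.ofReal (exp (-t ^ 2 / (2 * ‖v‖ ^ 2))) := by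
  have h : HasSubgaussianMGF (⟪v, ·⟫) (‖v‖₊ ^ 2) (ProbabilityTheory.stdGaussian E) := by
    rw [← HasSubgaussianMGF.id_map_iff (by fun_prop), map_inner_stdGaussian]
    exact hasSubgaussianMGF_id_gaussianReal _
  rw [← ofReal_measureReal]
  exact ENNReal.ofReal_le_ofReal (by simpa using h.measure_ge_le ht)

lemma stdGaussian_inner_ge_le_exp {v : E} {t K : ℝ} (ht : 0 < t) (hv : v ≠ 0)
    (hvK : ‖v‖ ^ 2 ≤ K * t) :
    ProbabilityTheory.stdGaussian E {x | t ≤ ⟪v, x⟫} ≤ ENNReal.ofReal (exp (-t / (2 * K))) := by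
  have hv₀ : 0 < ‖v‖ ^ 2 := by positivity
  have hK : 0 < K := pos_of_mul_pos_left (hv₀.trans_le hvK) ht.le
  refine (stdGaussian_inner_ge_le v ht.le).trans (ENNReal.ofReal_le_ofReal (exp_le_exp.2 ?_))
  rw [neg_div, neg_div, neg_le_neg_iff, div_le_div_iff₀ (by positivity) (by positivity)]
  nlinarith

end Gaussian

lemma stdGaussian_eq_stdGaussian_euclideanSpace (d : ℕ) :
    stdGaussian d = ProbabilityTheory.stdGaussian (EuclideanSpace ℝ (Fin d)) :=
  map_pi_eq_stdGaussian

section ClusterSum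

variable {ι E : Type*} [DecidableEq ι] [NormedAddCommGroup E] [InnerProductSpace ℝ E]
  {μ : ι → E} {D : ℝ}

lemma sum_inner_of_orthogonal (horth : Pairwise fun i j => ⟪μ i, μ j⟫ = 0)
    (hnorm : ∀ j, ‖μ j‖ ^ 2 = D) (A : Finset ι) (j : ι) :
    ⟪∑ i ∈ A, μ i, μ j⟫ = if j ∈ A then D else 0 := by
  have hμ : ∀ i, ⟪μ i, μ j⟫ = if i = j then D else 0 := fun i => by
    split_ifs with hij
    · rw [hij, real_inner_self_eq_norm_sq, hnorm]
    · exact horth hij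
  simp_rw [sum_inner, hμ, Finset.sum_ite_eq']

lemma inner_sum_sum_of_orthogonal (horth : Pairwise fun i j => ⟪μ i, μ j⟫ = 0)
    (hnorm : ∀ j, ‖μ j‖ ^ 2 = D) (A B : Finset ι) :
    ⟪∑ i ∈ A, μ i, ∑ j ∈ B, μ j⟫ = #(A ∩ B) * D := by
  simp_rw [inner_sum, sum_inner_of_orthogonal horth hnorm, Finset.sum_ite_mem, sum_const,
    nsmul_eq_mul, Finset.inter_comm]

variable [Fintype ι]

/-- `clusterSum μ s 1` and `clusterSum μ s (-1)` are the vectors `v₊`, `v₋`: the weights of the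
two neurons of `fFA μ s`. -/
noncomputable def clusterSum (μ : ι → E) (s : ι → ℝ) (σ : ℝ) : E :=
  ∑ j ∈ univ.filter (fun j => s j = σ), μ j

lemma inner_clusterSum_left (horth : Pairwise fun i j => ⟪μ i, μ j⟫ = 0)
    (hnorm : ∀ j, ‖μ j‖ ^ 2 = D) (s : ι → ℝ) (σ : ℝ) (j : ι) :
    ⟪clusterSum μ s σ, μ j⟫ = if s j = σ then D else 0 := by
  simp [clusterSum, sum_inner_of_orthogonal horth hnorm]

lemma norm_clusterSum_sq (horth : Pairwise fun i j => ⟪μ i, μ j⟫ = 0)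
    (hnorm : ∀ j, ‖μ j‖ ^ 2 = D) (s : ι → ℝ) (σ : ℝ) :
    ‖clusterSum μ s σ‖ ^ 2 = #(univ.filter fun j => s j = σ) * D := by
  rw [← real_inner_self_eq_norm_sq, clusterSum, inner_sum_sum_of_orthogonal horth hnorm,
    Finset.inter_self]

lemma inner_clusterSum_clusterSum_of_ne (horth : Pairwise fun i j => ⟪μ i, μ j⟫ = 0)
    (hnorm : ∀ j, ‖μ j‖ ^ 2 = D) (s : ι → ℝ) {σ τ : ℝ} (hστ : σ ≠ τ) :
    ⟪clusterSum μ s σ, clusterSum μ s τ⟫ = 0 := by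
  rw [clusterSum, clusterSum, inner_sum_sum_of_orthogonal horth hnorm, ← filter_and]
  simp only [filter_false_of_mem fun j _ (h : s j = σ ∧ s j = τ) => hστ (h.1.symm.trans h.2),
    card_empty, Nat.cast_zero, zero_mul]

lemma card_filter_add_card_filter_le (s : ι → ℝ) {σ τ : ℝ} (hστ : σ ≠ τ) :
    #(univ.filter fun j => s j = σ) + #(univ.filter fun j => s j = τ) ≤ Fintype.card ι := by
  rw [← card_union_of_disjoint]
  · exact card_le_univ _
  · exact disjoint_filter.2 fun j _ h h' => hστ (h.symm.trans h')

lemma two_le_card_of_nonempty {s : ι → ℝ} {σ τ : ℝ} (hστ : σ ≠ τ)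
    (hσ : (univ.filter fun j => s j = σ).Nonempty)
    (hτ : (univ.filter fun j => s j = τ).Nonempty) : 2 ≤ Fintype.card ι := by
  have := card_filter_add_card_filter_le s hστ
  have := hσ.card_pos
  have := hτ.card_pos
  omega

lemma norm_clusterSum_sq_le (horth : Pairwise fun i j => ⟪μ i, μ j⟫ = 0)
    (hnorm : ∀ j, ‖μ j‖ ^ 2 = D) (hD : 0 ≤ D) (s : ι → ℝ) (σ : ℝ) :
    ‖clusterSum μ s σ‖ ^ 2 ≤ Fintype.card ι * D := by
  rw [norm_clusterSum_sq horth hnorm]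
  gcongr
  exact card_le_univ _

lemma clusterSum_ne_zero (horth : Pairwise fun i j => ⟪μ i, μ j⟫ = 0)
    (hnorm : ∀ j, ‖μ j‖ ^ 2 = D) (hD : 0 < D) {s : ι → ℝ} {σ : ℝ}
    (hσ : (univ.filter fun j => s j = σ).Nonempty) : clusterSum μ s σ ≠ 0 := by
  intro h₀
  have h := norm_clusterSum_sq horth hnorm s σ
  rw [h₀, norm_zero, zero_pow two_ne_zero] at h
  have hcard : (0 : ℝ) < #(univ.filter fun j => s j = σ) := by exact_mod_cast hσ.card_pos
  exact (mul_pos hcard hD).ne h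

lemma norm_clusterSum_sub_sq_le (horth : Pairwise fun i j => ⟪μ i, μ j⟫ = 0)
    (hnorm : ∀ j, ‖μ j‖ ^ 2 = D) (hD : 0 ≤ D) (s : ι → ℝ) {σ τ : ℝ} (hστ : σ ≠ τ) :
    ‖clusterSum μ s σ - clusterSum μ s τ‖ ^ 2 ≤ Fintype.card ι * D := by
  rw [norm_sub_sq_real, inner_clusterSum_clusterSum_of_ne horth hnorm s hστ,
    norm_clusterSum_sq horth hnorm, norm_clusterSum_sq horth hnorm]
  have hcard : (#(univ.filter fun j => s j = σ) : ℝ) + #(univ.filter fun j => s j = τ)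
      ≤ Fintype.card ι := by
    exact_mod_cast card_filter_add_card_filter_le s hστ
  nlinarith

lemma stdGaussian_inner_ge_le_of_norm_eq_clusterSum [FiniteDimensional ℝ E]
    [MeasurableSpace E] [BorelSpace E] (horth : Pairwise fun i j => ⟪μ i, μ j⟫ = 0)
    (hnorm : ∀ j, ‖μ j‖ ^ 2 = D) (hD : 0 < D) {s : ι → ℝ} {σ : ℝ}
    (hσ : (univ.filter fun j => s j = σ).Nonempty) {v : E} (hv : ‖v‖ = ‖clusterSum μ s σ‖) :
    ProbabilityTheory.stdGaussian E {x | D ≤ ⟪v, x⟫} ≤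
      ENNReal.ofReal (exp (-D / (2 * Fintype.card ι))) := by
  refine stdGaussian_inner_ge_le_exp hD (norm_ne_zero_iff.1 ?_) ?_
  · rw [hv, norm_ne_zero_iff]
    exact clusterSum_ne_zero horth hnorm hD hσ
  · rw [hv]
    exact norm_clusterSum_sq_le horth hnorm hD.le s σ

end ClusterSum

lemma relu_nonneg (x : ℝ) : 0 ≤ relu x := le_max_right x 0

lemma le_relu (x : ℝ) : x ≤ relu x := le_max_left x 0

lemma relu_of_nonpos {x : ℝ} (hx : x ≤ 0) : relu x = 0 := max_eq_right hx

lemma sgn_eq_one_iff {x : ℝ} : sgn x = 1 ↔ 0 < x := by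
  unfold sgn; split_ifs with h <;> norm_num [h]

lemma sgn_eq_neg_one_iff {x : ℝ} : sgn x = -1 ↔ x ≤ 0 := by
  unfold sgn; split_ifs with h <;> norm_num [h, le_of_not_gt]

section Attack

variable {E : Type*} [NormedAddCommGroup E] [InnerProductSpace ℝ E] {u w z ξ : E} {a D : ℝ}

lemma lt_inner_of_relu_sub_relu_pos (huz : ⟪u, z⟫ = D) (huw : ⟪u, w⟫ = 0)
    (hu : 2 * D ≤ a * ‖u‖ ^ 2)
    (h : 0 < relu ⟪u, z + ξ + a • (w - u)⟫ - relu ⟪w, z + ξ + a • (w - u)⟫) :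
    D < ⟪u, ξ⟫ := by
  have hpos : 0 < ⟪u, z + ξ + a • (w - u)⟫ := by
    by_contra! hle
    linarith [relu_of_nonpos hle, relu_nonneg ⟪w, z + ξ + a • (w - u)⟫]
  rw [inner_add_right, inner_add_right, inner_smul_right, inner_sub_right, huz, huw,
    real_inner_self_eq_norm_sq] at hpos
  linarith

lemma le_inner_or_le_inner_of_relu_sub_relu_nonpos (hD : 0 ≤ D) (huz : ⟪u, z⟫ = 0)
    (hwz : ⟪w, z⟫ = D) (huw : ⟪u, w⟫ = 0) (hu : 2 * D ≤ a * ‖u‖ ^ 2)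
    (hw : 2 * D ≤ a * ‖w‖ ^ 2)
    (h : relu ⟪u, z + ξ + a • (u - w)⟫ - relu ⟪w, z + ξ + a • (u - w)⟫ ≤ 0) :
    D ≤ ⟪-u, ξ⟫ ∨ D ≤ ⟪w, ξ⟫ := by
  have hA : ⟪u, z + ξ + a • (u - w)⟫ = ⟪u, ξ⟫ + a * ‖u‖ ^ 2 := by
    rw [inner_add_right, inner_add_right, inner_smul_right, inner_sub_right, huz, huw,
      real_inner_self_eq_norm_sq]
    ring
  have hB : ⟪w, z + ξ + a • (u - w)⟫ = D + ⟪w, ξ⟫ - a * ‖w‖ ^ 2 := by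
    rw [inner_add_right, inner_add_right, inner_smul_right, inner_sub_right, hwz,
      real_inner_comm u w, huw, real_inner_self_eq_norm_sq]
    ring
  rw [inner_neg_left]
  by_contra! ⟨hu_ξ, hw_ξ⟩
  linarith [relu_of_nonpos (show ⟪w, z + ξ + a • (u - w)⟫ ≤ 0 by linarith),
    le_relu ⟪u, z + ξ + a • (u - w)⟫]

end Attack

lemma robustSet_subset {d k : ℕ} {μ : Fin k → EuclideanSpace ℝ (Fin d)} {s : Fin k → ℝ}
    {a δ : ℝ} (hnorm : ∀ j, ‖μ j‖ ^ 2 = d) (horth : Pairwise fun i j => ⟪μ i, μ j⟫ = 0)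
    (hs : ∀ j, s j = 1 ∨ s j = -1) (hpos : 2 ≤ a * #(univ.filter fun j => s j = 1))
    (hneg : 2 ≤ a * #(univ.filter fun j => s j = -1))
    (hδ : ‖a • (clusterSum μ s 1 - clusterSum μ s (-1))‖ ≤ δ) :
    {p : Fin k × EuclideanSpace ℝ (Fin d) |
        ∀ ρ : EuclideanSpace ℝ (Fin d), ‖ρ‖ ≤ δ → sgn (fFA μ s (μ p.1 + p.2 + ρ)) = s p.1} ⊆
      Set.univ ×ˢ ({ξ | (d : ℝ) ≤ ⟪clusterSum μ s 1, ξ⟫} ∪ {ξ | (d : ℝ) ≤ ⟪-clusterSum μ s 1, ξ⟫}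
        ∪ {ξ | (d : ℝ) ≤ ⟪clusterSum μ s (-1), ξ⟫}) := by
  rintro ⟨J, ξ⟩ hrobust
  simp only [Set.mem_ofPred_eq] at hrobust
  simp only [Set.mem_prod, Set.mem_univ, true_and, Set.mem_union, Set.mem_ofPred_eq]
  have hJ := inner_clusterSum_left horth hnorm s
  have horth' := inner_clusterSum_clusterSum_of_ne horth hnorm s (by norm_num : (1 : ℝ) ≠ -1)
  have hscale : ∀ σ : ℝ, 2 ≤ a * #(univ.filter fun j => s j = σ) →
      2 * (d : ℝ) ≤ a * ‖clusterSum μ s σ‖ ^ 2 := fun σ hσ => by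
    rw [norm_clusterSum_sq horth hnorm, ← mul_assoc]
    exact mul_le_mul_of_nonneg_right hσ (Nat.cast_nonneg d)
  rcases hs J with hsJ | hsJ
  · have h := hrobust (a • (clusterSum μ s (-1) - clusterSum μ s 1))
      (by rwa [← neg_sub, smul_neg, norm_neg])
    rw [hsJ, sgn_eq_one_iff] at h
    exact .inl (.inl (lt_inner_of_relu_sub_relu_pos (by simp [hJ, hsJ]) horth'
      (hscale 1 hpos) h).le)
  · have h := hrobust (a • (clusterSum μ s 1 - clusterSum μ s (-1))) hδ
    rw [hsJ, sgn_eq_neg_one_iff] at h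
    rcases le_inner_or_le_inner_of_relu_sub_relu_nonpos (Nat.cast_nonneg d)
      (by norm_num [hJ, hsJ]) (by norm_num [hJ, hsJ]) horth' (hscale 1 hpos)
      (hscale (-1) hneg) h with h | h
    exacts [.inl (.inr h), .inr h]

lemma measure_prod_le_of_subset_univ_prod {α β : Type*} [MeasurableSpace α]
    [MeasurableSpace β] {μ : Measure α} {ν : Measure β} [SFinite ν] (hμ : μ Set.univ ≤ 1)
    {S : Set (α × β)} {B : Set β} (hS : S ⊆ Set.univ ×ˢ B) : μ.prod ν S ≤ ν B :=
  calc μ.prod ν S ≤ μ.prod ν (Set.univ ×ˢ B) := measure_mono hS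
    _ = μ Set.univ * ν B := Measure.prod_prod _ _
    _ ≤ ν B := mul_le_of_le_one_left' hμ

lemma inv_card_smul_count_univ_le_one (n : ℕ) :
    ((n : ENNReal)⁻¹ • (Measure.count : Measure (Fin n))) Set.univ ≤ 1 := by
  simp [ENNReal.inv_mul_le_one]

lemma norm_div_smul_le {E : Type*} [NormedAddCommGroup E] [NormedSpace ℝ E] {v : E}
    {b k d : ℝ} (hb : 0 ≤ b) (hk : 0 < k) (hv : ‖v‖ ^ 2 ≤ k * d) :
    ‖(b / k) • v‖ ≤ b * √(d / k) := by
  have hv' : ‖v‖ / k ≤ √(d / k) := le_sqrt_of_sq_le <| by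
    rw [div_pow, div_le_div_iff₀ (by positivity) hk]
    nlinarith
  rw [norm_smul, norm_of_nonneg (by positivity), div_mul_eq_mul_div, mul_div_assoc]
  exact mul_le_mul_of_nonneg_left hv' hb

lemma two_le_div_mul {k c m : ℝ} (hk : 0 < k) (hc : 0 < 1 + c) (h : k / (1 + c) ≤ m) :
    2 ≤ 2 * (1 + c) / k * m := by
  rw [div_le_iff₀ hc] at h
  rw [div_mul_eq_mul_div, le_div_iff₀ hk]
  linarith

lemma mul_log_sq_le {d k : ℝ} (hd : 1 ≤ d) (h : 2 * k * log d < √d) : k * log d ^ 2 ≤ d := by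
  have hlog : log d ≤ 2 * √d := by
    have := log_le_sub_one_of_pos (sqrt_pos.2 (by linarith : 0 < d))
    rw [log_sqrt (by linarith)] at this
    linarith
  nlinarith [log_nonneg hd, sq_sqrt (by linarith : 0 ≤ d)]

lemma rpow_neg_log_div_two {d : ℝ} (hd : 0 < d) :
    d ^ (-log d / 2) = exp (-(log d ^ 2) / 2) := by
  rw [rpow_def_of_pos hd]
  ring_nf

lemma three_mul_exp_le {d k : ℝ} (hd : 1 ≤ d) (hk : 2 ≤ k) (h : 2 * k * log d < √d) :
    3 * exp (-d / (2 * k)) ≤ 2 * k * d ^ (-log d / 2) := by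
  have hexp : exp (-d / (2 * k)) ≤ d ^ (-log d / 2) := by
    rw [rpow_neg_log_div_two (by linarith), exp_le_exp, neg_div, neg_div, neg_le_neg_iff,
      div_le_div_iff₀ (by norm_num) (by linarith)]
    nlinarith [mul_log_sq_le hd h]
  nlinarith [exp_pos (-d / (2 * k))]

theorem featureAveraging_nonrobust (d k : ℕ) (hd : 2 ≤ d) (hk : 1 ≤ k)
    (hlog : 2 * k * Real.log d < Real.sqrt d)
    (μ : Fin k → EuclideanSpace ℝ (Fin d))
    (hnorm : ∀ j, ‖μ j‖ = Real.sqrt d)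
    (horth : ∀ i j, i ≠ j → ⟪μ i, μ j⟫ = 0)
    (s : Fin k → ℝ) (hs : ∀ j, s j = 1 ∨ s j = -1)
    (c : ℝ) (hc : 1 ≤ c)
    (hpos : (k : ℝ) / (1 + c) ≤ (univ.filter (fun j => s j = 1)).card)
    (hneg : (k : ℝ) / (1 + c) ≤ (univ.filter (fun j => s j = -1)).card) :
    (((k : ENNReal)⁻¹ • (Measure.count : Measure (Fin k))).prod (stdGaussian d))
        {p : Fin k × EuclideanSpace ℝ (Fin d) |
          ∀ ρ : EuclideanSpace ℝ (Fin d), ‖ρ‖ ≤ 2 * (1 + c) * Real.sqrt (d / k) →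
            sgn (fFA μ s (μ p.1 + p.2 + ρ)) = s p.1} ≤
      ENNReal.ofReal (2 * k * (d : ℝ) ^ (-(Real.log d) / 2)) := by
  have hd₀ : (0 : ℝ) < d := by exact_mod_cast (by omega : 0 < d)
  have hk₀ : (0 : ℝ) < k := by exact_mod_cast hk
  have hc₀ : 0 < 1 + c := by linarith
  have hnorm' : ∀ j, ‖μ j‖ ^ 2 = d := fun j => by rw [hnorm, sq_sqrt hd₀.le]
  have hne : ∀ σ : ℝ, (k : ℝ) / (1 + c) ≤ #(univ.filter fun j => s j = σ) →
      (univ.filter fun j => s j = σ).Nonempty := fun σ h =>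
    card_pos.1 (by exact_mod_cast (div_pos hk₀ hc₀).trans_le h)
  have hP := hne 1 hpos
  have hN := hne (-1) hneg
  have hk₂ : (2 : ℝ) ≤ k := by
    exact_mod_cast Fintype.card_fin k ▸ two_le_card_of_nonempty (by norm_num) hP hN
  have hbad := fun σ hσ v hv => stdGaussian_inner_ge_le_of_norm_eq_clusterSum
    (s := s) (σ := σ) (v := v) horth hnorm' hd₀ hσ hv
  simp only [Fintype.card_fin] at hbad
  have hattack := norm_div_smul_le (b := 2 * (1 + c)) (by positivity) hk₀ <| by
    simpa using norm_clusterSum_sub_sq_le horth hnorm' hd₀.le s (by norm_num : (1 : ℝ) ≠ -1)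
  rw [stdGaussian_eq_stdGaussian_euclideanSpace]
  calc _ ≤ ProbabilityTheory.stdGaussian _ ({ξ | (d : ℝ) ≤ ⟪clusterSum μ s 1, ξ⟫} ∪
        {ξ | (d : ℝ) ≤ ⟪-clusterSum μ s 1, ξ⟫} ∪ {ξ | (d : ℝ) ≤ ⟪clusterSum μ s (-1), ξ⟫}) :=
        measure_prod_le_of_subset_univ_prod (inv_card_smul_count_univ_le_one k)
          (robustSet_subset hnorm' horth hs (two_le_div_mul hk₀ hc₀ hpos)
            (two_le_div_mul hk₀ hc₀ hneg) hattack)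
    _ ≤ _ := (measure_union_le _ _).trans (add_le_add_left (measure_union_le _ _) _)
    _ ≤ 3 * ENNReal.ofReal (exp (-d / (2 * k))) :=
        (add_le_add (add_le_add (hbad 1 hP _ rfl) (hbad 1 hP _ (norm_neg _)))
          (hbad (-1) hN _ rfl)).trans_eq (by ring)
    _ = ENNReal.ofReal (3 * exp (-d / (2 * k))) := by rw [ENNReal.ofReal_mul zero_le_three]; simp
    _ ≤ _ := ENNReal.ofReal_le_ofReal
        (three_mul_exp_le (by exact_mod_cast (by omega : 1 ≤ d)) hk₂ hlog)
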